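/- arXiv:1309.2368 — 4 statements merged into one kernel-verified Lean document; each statement's English description precedes it below -/
import Mathlib

section
/- (Proposition 1.1.3) Suppose Λ is a g×g matrix with integer entries such that the entrywise complex conjugate of Γ satisfies conj(Γ) = Λ − Γ. Then for all z ∈ ℂ^g, conj(θ(conj(z))) = θ(z + (1/2)d), where d = (Λ_{11}, …, Λ_{gg}) ∈ ℂ^g is the diagonal vector of Λ and conj(z) denotes the componentwise complex conjugate of z. -/
open scoped BigOperators

section aux
open Complex Finset

lemma zmod2_mul_self : ∀ x : ZMod 2, x * x = x := by decide

lemma even_quad (g : ℕ) (Λ : Matrix (Fin g) (Fin g) ℤ)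
    (hs : ∀ j k, Λ j k = Λ k j) (m : Fin g → ℤ) :
    Even ((∑ j, m j * ∑ k, Λ j k * m k) + ∑ j, Λ j j * m j) := by
  rw [even_iff_two_dvd, show (2:ℤ) = ((2:ℕ):ℤ) by norm_num, ← ZMod.intCast_zmod_eq_zero_iff_dvd]
  push_cast
  set c : Fin g → ZMod 2 := fun j => ((m j : ℤ) : ZMod 2) with hc
  have h1 : (∑ j, ((m j : ℤ) : ZMod 2) * ∑ k, ((Λ j k : ℤ) : ZMod 2) * ((m k : ℤ) : ZMod 2))
      = ∑ p ∈ Finset.univ ×ˢ Finset.univ,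
          ((Λ p.1 p.2 : ℤ) : ZMod 2) * c p.1 * c p.2 := by
    rw [Finset.sum_product]
    refine Finset.sum_congr rfl fun j _ => ?_
    rw [Finset.mul_sum]
    exact Finset.sum_congr rfl fun k _ => by ring
  rw [h1]
  rw [← Finset.diag_union_offDiag (Finset.univ : Finset (Fin g)),
    Finset.sum_union (Finset.disjoint_diag_offDiag _)]
  have hdiag : (∑ p ∈ (Finset.univ : Finset (Fin g)).diag,
      ((Λ p.1 p.2 : ℤ) : ZMod 2) * c p.1 * c p.2)
      = ∑ j, ((Λ j j : ℤ) : ZMod 2) * c j := by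
    rw [Finset.sum_diag]
    exact Finset.sum_congr rfl fun j _ => by
      rw [mul_assoc, zmod2_mul_self]
  have hoff : (∑ p ∈ (Finset.univ : Finset (Fin g)).offDiag,
      ((Λ p.1 p.2 : ℤ) : ZMod 2) * c p.1 * c p.2) = 0 := by
    refine Finset.sum_involution (fun p _ => p.swap) ?_ ?_ ?_ ?_
    · intro p hp
      simp only [Prod.fst_swap, Prod.snd_swap]
      rw [hs p.2 p.1]
      have : ∀ x : ZMod 2, x + x = 0 := by decide
      rw [show ((Λ p.1 p.2 : ℤ) : ZMod 2) * c p.2 * c p.1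
        = ((Λ p.1 p.2 : ℤ) : ZMod 2) * c p.1 * c p.2 by ring]
      exact this _
    · intro p hp _
      have hne := (Finset.mem_offDiag.mp hp).2.2
      exact fun h => hne (congrArg Prod.fst h).symm
    · intro p hp
      rcases Finset.mem_offDiag.mp hp with ⟨_, _, hne⟩
      exact Finset.mem_offDiag.mpr ⟨Finset.mem_univ _, Finset.mem_univ _, fun h => hne h.symm⟩
    · intro p hp; exact Prod.swap_swap p
  rw [hdiag, hoff, add_zero]
  have : ∀ x : ZMod 2, x + x = 0 := by decide
  rw [← Finset.sum_add_distrib]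
  refine Finset.sum_eq_zero fun j _ => ?_
  simp only [hc]
  exact this _

end aux

/-- The Riemann theta function `θ(z) = Σ_{m ∈ ℤ^g} exp(2πi⟨m,z⟩ + πi⟨m,Γm⟩)`. -/
noncomputable def theta {g : ℕ} (Γ : Matrix (Fin g) (Fin g) ℂ) (z : Fin g → ℂ) : ℂ :=
  ∑' m : Fin g → ℤ,
    Complex.exp (2 * Real.pi * Complex.I * (∑ j, (m j : ℂ) * z j)
      + Real.pi * Complex.I * (∑ j, (m j : ℂ) * ∑ k, Γ j k * (m k : ℂ)))

/-- (Proposition 1.1.3) If `conj(Γ) = Λ − Γ` for an integer matrix `Λ`, then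
`conj(θ(conj z)) = θ(z + (1/2)d)` where `d` is the diagonal of `Λ`. -/
theorem theta_conj_shift (g : ℕ) (hg : 0 < g) (Γ : Matrix (Fin g) (Fin g) ℂ)
    (hΓsymm : Γ.IsSymm) (hΓim : (Γ.map Complex.im).PosDef)
    (Λ : Matrix (Fin g) (Fin g) ℤ)
    (hΛ : ∀ j k, starRingEnd ℂ (Γ j k) = (Λ j k : ℂ) - Γ j k)
    (z : Fin g → ℂ) :
    starRingEnd ℂ (theta Γ (fun j => starRingEnd ℂ (z j)))
      = theta Γ (z + fun j => (1 / 2 : ℂ) * (Λ j j : ℂ)) := by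
  have hΛsym : ∀ j k, Λ j k = Λ k j := by
    intro j k
    have e1 : (Λ j k : ℂ) = starRingEnd ℂ (Γ j k) + Γ j k := by rw [hΛ j k]; ring
    have e2 : (Λ k j : ℂ) = starRingEnd ℂ (Γ k j) + Γ k j := by rw [hΛ k j]; ring
    have hΓs : Γ k j = Γ j k := hΓsymm.apply j k
    have : (Λ j k : ℂ) = (Λ k j : ℂ) := by rw [e1, e2, hΓs]
    exact_mod_cast this
  unfold theta
  rw [starRingEnd_apply, tsum_star,
    ← Equiv.tsum_eq (Equiv.neg (Fin g → ℤ))]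
  refine tsum_congr fun m => ?_
  simp only [Equiv.neg_apply, Pi.neg_apply, Int.cast_neg, Pi.add_apply]
  obtain ⟨k, hk⟩ := even_quad g Λ hΛsym m
  set S1 : ℂ := ∑ j, (m j : ℂ) * z j with hS1
  set SΓ : ℂ := ∑ j, (m j : ℂ) * ∑ k', Γ j k' * (m k' : ℂ) with hSΓ
  set SΛ : ℂ := ∑ j, (m j : ℂ) * ∑ k', (Λ j k' : ℂ) * (m k' : ℂ) with hSΛ
  set DD : ℂ := ∑ j, (m j : ℂ) * (Λ j j : ℂ) with hDD
  have h1 : (∑ j, -(m j : ℂ) * starRingEnd ℂ (z j)) = starRingEnd ℂ (-S1) := by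
    rw [map_neg, hS1, map_sum, ← Finset.sum_neg_distrib]
    refine Finset.sum_congr rfl fun j _ => ?_
    simp only [map_mul, map_intCast]
    ring
  have h2 : (∑ j, -(m j : ℂ) * ∑ k', Γ j k' * -(m k' : ℂ)) = SΓ := by
    rw [hSΓ]
    refine Finset.sum_congr rfl fun j _ => ?_
    have : (∑ k', Γ j k' * -(m k' : ℂ)) = -∑ k', Γ j k' * (m k' : ℂ) := by
      rw [← Finset.sum_neg_distrib]
      exact Finset.sum_congr rfl fun k' _ => by ring
    rw [this]; ring
  have h3 : starRingEnd ℂ SΓ = SΛ - SΓ := by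
    rw [hSΓ, map_sum, hSΛ, ← Finset.sum_sub_distrib]
    refine Finset.sum_congr rfl fun j _ => ?_
    rw [map_mul, map_sum, map_intCast]
    have : (∑ k', starRingEnd ℂ (Γ j k' * (m k' : ℂ)))
        = (∑ k', (Λ j k' : ℂ) * (m k' : ℂ)) - ∑ k', Γ j k' * (m k' : ℂ) := by
      rw [← Finset.sum_sub_distrib]
      refine Finset.sum_congr rfl fun k' _ => ?_
      rw [map_mul, hΛ, map_intCast]
      ring
    rw [this]; ring
  have hcast : SΛ + DD = 2 * (k : ℂ) := by
    have := congrArg (fun n : ℤ => (n : ℂ)) hk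
    push_cast at this
    rw [hSΛ, hDD]
    rw [show (2 : ℂ) * k = (k : ℂ) + k by ring, ← this]
    congr 1
    exact Finset.sum_congr rfl fun j _ => by ring
  have h5 : (∑ j, (m j : ℂ) * (z j + 1 / 2 * (Λ j j : ℂ))) = S1 + (1 / 2) * DD := by
    rw [hS1, hDD, Finset.mul_sum, ← Finset.sum_add_distrib]
    refine Finset.sum_congr rfl fun j _ => by ring
  have hX : (starRingEnd ℂ) (2 * (Real.pi : ℂ) * Complex.I * (starRingEnd ℂ) (-S1)
        + (Real.pi : ℂ) * Complex.I * SΓ)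
      = (2 * (Real.pi : ℂ) * Complex.I * (S1 + 1 / 2 * DD)
          + (Real.pi : ℂ) * Complex.I * SΓ) + ((-k : ℤ) : ℂ) * (2 * Real.pi * Complex.I) := by
    simp only [map_add, map_mul, Complex.conj_conj, Complex.conj_I, Complex.conj_ofReal,
      map_ofNat, h3]
    push_cast
    linear_combination (-(Real.pi : ℂ) * Complex.I) * hcast
  rw [h1, h2, h5, Complex.star_def, ← Complex.exp_conj, hX, Complex.exp_add,
    Complex.exp_int_mul_two_pi_mul_I, mul_one]
end

section
/- Suppose Λ is a g×g matrix with integer entries whose diagonal entries are all zero and such that the entrywise complex conjugate of Γ satisfies conj(Γ) = Λ − Γ. Then conj(θ(conj(z))) = θ(z) for all z ∈ ℂ^g; in particular θ(x) is a real number for every x ∈ ℝ^g. (This applies in particular when conj(Γ) = −Γ, and when conj(Γ) = 𝒫 − Γ with 𝒫_{jk} = 1 − δ_{jk}.) -/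
open scoped BigOperators

/-- The quadratic form of a symmetric integer matrix with zero diagonal is even. -/
lemma even_quadform {g : ℕ} (Λ : Matrix (Fin g) (Fin g) ℤ) (hdiag : ∀ j, Λ j j = 0)
    (hsymm : ∀ j k, Λ j k = Λ k j) (m : Fin g → ℤ) :
    (2 : ℤ) ∣ ∑ j, m j * ∑ k, Λ j k * m k := by
  have h : ((∑ j, m j * ∑ k, Λ j k * m k : ℤ) : ZMod 2)
      = ∑ p : Fin g × Fin g, ((Λ p.1 p.2 * m p.1 * m p.2 : ℤ) : ZMod 2) := by
    rw [Fintype.sum_prod_type]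
    push_cast
    simp only [Finset.mul_sum]
    congr 1; funext j; congr 1; funext k; ring
  have h0 : ((∑ j, m j * ∑ k, Λ j k * m k : ℤ) : ZMod 2) = 0 := by
    rw [h]
    refine Finset.sum_ninvolution Prod.swap (fun p => ?_) (fun p hp => ?_)
      (fun p => Finset.mem_univ _) (fun p => Prod.swap_swap p)
    · have : (Λ p.2 p.1 * m p.2 * m p.1 : ℤ) = (Λ p.1 p.2 * m p.1 * m p.2 : ℤ) := by
        rw [hsymm p.2 p.1]; ring
      simp only [Prod.fst_swap, Prod.snd_swap, this]
      exact CharTwo.add_self_eq_zero _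
    · intro hswap
      apply hp
      have h1 : p.2 = p.1 := congrArg Prod.fst hswap
      rw [h1, hdiag]
      simp
  exact_mod_cast (ZMod.intCast_zmod_eq_zero_iff_dvd _ 2).mp h0

/-- If `conj(Γ) = Λ − Γ` for an integer matrix `Λ` with zero diagonal, then
`conj(θ(conj z)) = θ(z)` for all `z`; in particular `θ(x)` is real for real `x`. -/
theorem theta_real (g : ℕ) (hg : 0 < g) (Γ : Matrix (Fin g) (Fin g) ℂ)
    (hΓsymm : Γ.IsSymm) (hΓim : (Γ.map Complex.im).PosDef)
    (Λ : Matrix (Fin g) (Fin g) ℤ) (hdiag : ∀ j, Λ j j = 0)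
    (hΛ : ∀ j k, starRingEnd ℂ (Γ j k) = (Λ j k : ℂ) - Γ j k) :
    (∀ z : Fin g → ℂ,
        starRingEnd ℂ (theta Γ (fun j => starRingEnd ℂ (z j))) = theta Γ z) ∧
    (∀ x : Fin g → ℝ, ∃ ρ : ℝ, theta Γ (fun j => (x j : ℂ)) = (ρ : ℂ)) := by
  have hΛsymm : ∀ j k, Λ j k = Λ k j := by
    intro j k
    have h1 := hΛ j k
    have h2 := hΛ k j
    have hs : Γ k j = Γ j k := by
      conv_lhs => rw [← hΓsymm]
      rfl
    have : ((Λ j k : ℂ)) = ((Λ k j : ℂ)) := by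
      rw [eq_sub_iff_add_eq] at h1 h2
      rw [hs] at h2
      rw [← h1, ← h2]
    exact_mod_cast this
  have key : ∀ z : Fin g → ℂ,
      starRingEnd ℂ (theta Γ (fun j => starRingEnd ℂ (z j))) = theta Γ z := by
    intro z
    unfold theta
    rw [starRingEnd_apply, tsum_star]
    rw [← (Equiv.neg (Fin g → ℤ)).tsum_eq fun m =>
      Complex.exp (2 * Real.pi * Complex.I * (∑ j, (m j : ℂ) * z j)
        + Real.pi * Complex.I * (∑ j, (m j : ℂ) * ∑ k, Γ j k * (m k : ℂ)))]
    apply tsum_congr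
    intro m
    rw [← starRingEnd_apply, ← Complex.exp_conj]
    simp only [Equiv.neg_apply, Pi.neg_apply, Int.cast_neg]
    obtain ⟨N, hN⟩ := even_quadform Λ hdiag hΛsymm m
    have hL : (∑ j, (m j : ℂ) * ∑ k, (Λ j k : ℂ) * (m k : ℂ)) = 2 * (N : ℂ) := by
      exact_mod_cast congrArg (fun n : ℤ => (n : ℂ)) hN
    have harg : (starRingEnd ℂ) (2 * Real.pi * Complex.I * (∑ j, (m j : ℂ) * starRingEnd ℂ (z j))
        + Real.pi * Complex.I * (∑ j, (m j : ℂ) * ∑ k, Γ j k * (m k : ℂ)))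
        = (2 * Real.pi * Complex.I * (∑ j, (-(m j : ℂ)) * z j)
          + Real.pi * Complex.I * (∑ j, (-(m j : ℂ)) * ∑ k, Γ j k * (-(m k : ℂ))))
          + (-N : ℤ) * (2 * Real.pi * Complex.I) := by
      simp only [map_add, map_mul, map_sum, Complex.conj_I, Complex.conj_conj,
        Complex.conj_ofReal, map_ofNat, map_intCast, hΛ]
      have expand : ∀ j, (m j : ℂ) * ∑ k, ((Λ j k : ℂ) - Γ j k) * (m k : ℂ)
          = (m j : ℂ) * ∑ k, (Λ j k : ℂ) * (m k : ℂ)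
            - (m j : ℂ) * ∑ k, Γ j k * (m k : ℂ) := by
        intro j
        rw [← mul_sub, ← Finset.sum_sub_distrib]
        congr 1; apply Finset.sum_congr rfl; intro k _; ring
      simp only [expand, Finset.sum_sub_distrib, hL]
      push_cast
      simp only [neg_mul, mul_neg, neg_neg, Finset.sum_neg_distrib]
      ring
    rw [harg, Complex.exp_add, Complex.exp_int_mul_two_pi_mul_I, mul_one]
  refine ⟨key, fun x => ?_⟩
  have hx : theta Γ (fun j => ((x j : ℂ))) = starRingEnd ℂ (theta Γ (fun j => ((x j : ℂ)))) := by
    have hfun : (fun j => starRingEnd ℂ ((x j : ℂ))) = fun j => ((x j : ℂ)) :=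
      funext fun j => Complex.conj_ofReal _
    conv_lhs => rw [← key (fun j => (x j : ℂ)), hfun]
  obtain ⟨r, hr⟩ := Complex.conj_eq_iff_real.mp hx.symm
  exact ⟨r, hr⟩
end

section
/- (Theorem 3.1, focusing reduction q = conj(r), theta-function form) Assume conj(Γ) = −Γ (entrywise conjugate). Let T ∈ ℝ^g; let V, W ∈ ℂ^g be purely imaginary vectors, i.e. conj(V) = −V and conj(W) = −W; let e, ω, ϑ ∈ ℝ; let Z, Y ∈ ℂ^g and a, b ∈ ℤ^g satisfy Z = −conj(Y) + T + a + Γb and ⟨b,T⟩ ∈ ℤ. Assume θ(Z) ≠ 0 and θ(Z−T) ≠ 0, and set q₀ = (θ(Z−T)/θ(Z))·exp(iϑ). For real x, t put u = Vx + Wt and define q(x,t) = q₀ · (θ(Z)/θ(Z−T)) · (θ(Z−T+u)/θ(Z+u)) · exp(i(ex+ωt)) and r(x,t) = q₀⁻¹ · (θ(Z−T)/θ(Z)) · (θ(Y+u)/θ(Y−T+u)) · exp(−i(ex+ωt)). Then for all real x, t such that θ(Z+u) ≠ 0 and θ(Y−T+u) ≠ 0, one has q(x,t) = conj(r(x,t)).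 -/
open scoped BigOperators

lemma pair_swap {g : ℕ} (Γ : Matrix (Fin g) (Fin g) ℂ) (hΓsymm : Γ.IsSymm)
    (u v : Fin g → ℂ) :
    ∑ j, u j * ∑ k, Γ j k * v k = ∑ j, v j * ∑ k, Γ j k * u k := by
  simp_rw [Finset.mul_sum]
  rw [Finset.sum_comm]
  refine Finset.sum_congr rfl fun j _ => Finset.sum_congr rfl fun k _ => ?_
  rw [hΓsymm.apply k j]; ring

lemma theta_conj {g : ℕ} (Γ : Matrix (Fin g) (Fin g) ℂ)
    (hΓconj : ∀ j k, starRingEnd ℂ (Γ j k) = -Γ j k) (w : Fin g → ℂ) :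
    starRingEnd ℂ (theta Γ w) = theta Γ (fun j => -(starRingEnd ℂ (w j))) := by
  unfold theta
  rw [show (starRingEnd ℂ) (∑' m : Fin g → ℤ, Complex.exp
      (2 * Real.pi * Complex.I * (∑ j, (m j : ℂ) * w j)
        + Real.pi * Complex.I * (∑ j, (m j : ℂ) * ∑ k, Γ j k * (m k : ℂ))))
    = ∑' m : Fin g → ℤ, (starRingEnd ℂ) (Complex.exp
      (2 * Real.pi * Complex.I * (∑ j, (m j : ℂ) * w j)
        + Real.pi * Complex.I * (∑ j, (m j : ℂ) * ∑ k, Γ j k * (m k : ℂ)))) from tsum_star]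
  refine tsum_congr fun m => ?_
  rw [← Complex.exp_conj]
  congr 1
  simp only [map_add, map_mul, map_sum, Complex.conj_I, Complex.conj_ofReal, map_intCast,
    map_ofNat, hΓconj]
  simp only [mul_neg, neg_mul, Finset.sum_neg_distrib, mul_neg]
  ring

lemma theta_shift {g : ℕ} (Γ : Matrix (Fin g) (Fin g) ℂ) (hΓsymm : Γ.IsSymm)
    (w : Fin g → ℂ) (a b : Fin g → ℤ) :
    theta Γ (w + (fun j => (a j : ℂ)) + Γ.mulVec (fun j => (b j : ℂ)))
      = Complex.exp (-(2 * Real.pi * Complex.I * (∑ j, (b j : ℂ) * w j))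
          - Real.pi * Complex.I * (∑ j, (b j : ℂ) * ∑ k, Γ j k * (b k : ℂ)))
        * theta Γ w := by
  unfold theta
  rw [← tsum_mul_left, ← (Equiv.subRight b).tsum_eq]
  refine tsum_congr fun m => ?_
  simp only [Equiv.subRight_apply, Pi.add_apply, Pi.sub_apply, Int.cast_sub,
    Matrix.mulVec, dotProduct, ← Complex.exp_add]
  have hA : ∑ j, ((m j : ℂ) - (b j : ℂ)) * (w j + (a j : ℂ) + ∑ k, Γ j k * (b k : ℂ))
      = (∑ j, (m j : ℂ) * w j) - (∑ j, (b j : ℂ) * w j)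
        + ((∑ j, (m j : ℂ) * (a j : ℂ)) - (∑ j, (b j : ℂ) * (a j : ℂ)))
        + ((∑ j, (m j : ℂ) * ∑ k, Γ j k * (b k : ℂ))
            - (∑ j, (b j : ℂ) * ∑ k, Γ j k * (b k : ℂ))) := by
    simp only [sub_mul, mul_add, Finset.sum_add_distrib, Finset.sum_sub_distrib]
  have hB : ∑ j, ((m j : ℂ) - (b j : ℂ)) * ∑ k, Γ j k * ((m k : ℂ) - (b k : ℂ))
      = (∑ j, (m j : ℂ) * ∑ k, Γ j k * (m k : ℂ))
        - (∑ j, (m j : ℂ) * ∑ k, Γ j k * (b k : ℂ))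
        - (∑ j, (b j : ℂ) * ∑ k, Γ j k * (m k : ℂ))
        + (∑ j, (b j : ℂ) * ∑ k, Γ j k * (b k : ℂ)) := by
    simp only [mul_sub, Finset.sum_sub_distrib, sub_mul, Finset.mul_sum]
    ring
  have hmb := pair_swap Γ hΓsymm (fun j => (m j : ℂ)) (fun j => (b j : ℂ))
  have hcast : ((∑ j, (m j - b j) * a j : ℤ) : ℂ)
      = (∑ j, (m j : ℂ) * (a j : ℂ)) - (∑ j, (b j : ℂ) * (a j : ℂ)) := by
    push_cast
    simp [sub_mul, Finset.sum_sub_distrib]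
  have key : (2 * Real.pi * Complex.I *
        (∑ j, ((m j : ℂ) - (b j : ℂ)) * (w j + (a j : ℂ) + ∑ k, Γ j k * (b k : ℂ)))
      + Real.pi * Complex.I *
        (∑ j, ((m j : ℂ) - (b j : ℂ)) * ∑ k, Γ j k * ((m k : ℂ) - (b k : ℂ))))
    = ((-(2 * Real.pi * Complex.I * (∑ j, (b j : ℂ) * w j))
          - Real.pi * Complex.I * (∑ j, (b j : ℂ) * ∑ k, Γ j k * (b k : ℂ)))
      + (2 * Real.pi * Complex.I * (∑ j, (m j : ℂ) * w j)
        + Real.pi * Complex.I * (∑ j, (m j : ℂ) * ∑ k, Γ j k * (m k : ℂ))))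
      + ((∑ j, (m j - b j) * a j : ℤ) : ℂ) * (2 * Real.pi * Complex.I) := by
    rw [hA, hB, hcast]
    linear_combination (Real.pi * Complex.I) * hmb
  rw [key, Complex.exp_add, Complex.exp_int_mul_two_pi_mul_I, mul_one]


/-- (Theorem 3.1, focusing reduction `q = conj r` in theta-function form.)
Under `conj Γ = −Γ`, real `T`, purely imaginary frequency vectors `V, W`,
the constraint `Z = −conj Y + T + a + Γb` with `⟨b,T⟩ ∈ ℤ`, and the choice
`q₀ = (θ(Z−T)/θ(Z))·e^{iϑ}` of initial value, the theta-function expressions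
`q(x,t)` and `r(x,t)` of (1.27)–(1.28) satisfy `q(x,t) = conj (r(x,t))`
wherever the denominators do not vanish. -/
theorem focusing_reduction (g : ℕ) (hg : 0 < g) (Γ : Matrix (Fin g) (Fin g) ℂ)
    (hΓsymm : Γ.IsSymm) (hΓim : (Γ.map Complex.im).PosDef)
    (hΓconj : ∀ j k, starRingEnd ℂ (Γ j k) = -Γ j k)
    (T : Fin g → ℂ) (hT : ∀ j, starRingEnd ℂ (T j) = T j)
    (V W : Fin g → ℂ)
    (hV : ∀ j, starRingEnd ℂ (V j) = -V j)
    (hW : ∀ j, starRingEnd ℂ (W j) = -W j)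
    (e ω ϑ : ℝ) (Z Y : Fin g → ℂ) (a b : Fin g → ℤ)
    (hZY : Z = (fun j => -(starRingEnd ℂ (Y j))) + T
        + (fun j => (a j : ℂ)) + Γ.mulVec (fun j => (b j : ℂ)))
    (hbT : ∃ N : ℤ, ∑ j, (b j : ℂ) * T j = (N : ℂ))
    (hθZ : theta Γ Z ≠ 0) (hθZT : theta Γ (Z - T) ≠ 0)
    (q₀ : ℂ)
    (hq₀ : q₀ = theta Γ (Z - T) / theta Γ Z * Complex.exp (Complex.I * (ϑ : ℂ))) :
    ∀ x t : ℝ,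
      theta Γ (Z + fun j => V j * (x : ℂ) + W j * (t : ℂ)) ≠ 0 →
      theta Γ (Y - T + fun j => V j * (x : ℂ) + W j * (t : ℂ)) ≠ 0 →
      q₀ * (theta Γ Z / theta Γ (Z - T))
          * (theta Γ (Z - T + fun j => V j * (x : ℂ) + W j * (t : ℂ))
              / theta Γ (Z + fun j => V j * (x : ℂ) + W j * (t : ℂ)))
          * Complex.exp (Complex.I * ((e : ℂ) * (x : ℂ) + (ω : ℂ) * (t : ℂ)))
        = starRingEnd ℂ
            (q₀⁻¹ * (theta Γ (Z - T) / theta Γ Z)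
              * (theta Γ (Y + fun j => V j * (x : ℂ) + W j * (t : ℂ))
                  / theta Γ (Y - T + fun j => V j * (x : ℂ) + W j * (t : ℂ)))
              * Complex.exp (-(Complex.I * ((e : ℂ) * (x : ℂ) + (ω : ℂ) * (t : ℂ))))) := by
  intro x t hP hQ
  set u : Fin g → ℂ := fun j => V j * (x : ℂ) + W j * (t : ℂ) with hu
  have hcu : ∀ j, starRingEnd ℂ (u j) = -u j := by
    intro j
    simp only [hu, map_add, map_mul, Complex.conj_ofReal, hV j, hW j]
    ring
  have hZj : ∀ j, -(starRingEnd ℂ (Y j))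
      = Z j - T j - (a j : ℂ) - Γ.mulVec (fun j => (b j : ℂ)) j := by
    intro j
    have h := congrFun hZY j
    simp only [Pi.add_apply] at h
    linear_combination -h
  have hmv : ∀ j, Γ.mulVec (fun j => (((-b) j : ℤ) : ℂ)) j
      = -(Γ.mulVec (fun j => ((b j : ℤ) : ℂ)) j) := by
    intro j
    simp [Matrix.mulVec, dotProduct, mul_neg, Finset.sum_neg_distrib]
  -- argument identities
  have harg1 : (fun j => -(starRingEnd ℂ ((Y + u) j)))
      = ((Z - T + u) + (fun j => (((-a) j : ℤ) : ℂ))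
          + Γ.mulVec (fun j => (((-b) j : ℤ) : ℂ))) := by
    funext j
    simp only [Pi.add_apply, Pi.sub_apply, map_add, map_sub, hcu j, hT j]
    rw [hmv j]
    simp only [Pi.neg_apply]
    push_cast
    linear_combination hZj j
  have harg2 : (fun j => -(starRingEnd ℂ ((Y - T + u) j)))
      = ((Z + u) + (fun j => (((-a) j : ℤ) : ℂ))
          + Γ.mulVec (fun j => (((-b) j : ℤ) : ℂ))) := by
    funext j
    simp only [Pi.add_apply, Pi.sub_apply, map_add, map_sub, hcu j, hT j]
    rw [hmv j]
    simp only [Pi.neg_apply]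
    push_cast
    linear_combination hZj j
  have h1 : starRingEnd ℂ (theta Γ (Y + u))
      = Complex.exp (-(2 * Real.pi * Complex.I * (∑ j, (((-b) j : ℤ) : ℂ) * (Z - T + u) j))
          - Real.pi * Complex.I *
            (∑ j, (((-b) j : ℤ) : ℂ) * ∑ k, Γ j k * (((-b) k : ℤ) : ℂ)))
        * theta Γ (Z - T + u) := by
    rw [theta_conj Γ hΓconj, harg1, theta_shift Γ hΓsymm]
  have h2 : starRingEnd ℂ (theta Γ (Y - T + u))
      = Complex.exp (-(2 * Real.pi * Complex.I * (∑ j, (((-b) j : ℤ) : ℂ) * (Z + u) j))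
          - Real.pi * Complex.I *
            (∑ j, (((-b) j : ℤ) : ℂ) * ∑ k, Γ j k * (((-b) k : ℤ) : ℂ)))
        * theta Γ (Z + u) := by
    rw [theta_conj Γ hΓconj, harg2, theta_shift Γ hΓsymm]
  obtain ⟨N, hN⟩ := hbT
  have hC : Complex.exp (-(2 * Real.pi * Complex.I * (∑ j, (((-b) j : ℤ) : ℂ) * (Z - T + u) j))
          - Real.pi * Complex.I *
            (∑ j, (((-b) j : ℤ) : ℂ) * ∑ k, Γ j k * (((-b) k : ℤ) : ℂ)))
      = Complex.exp (-(2 * Real.pi * Complex.I * (∑ j, (((-b) j : ℤ) : ℂ) * (Z + u) j))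
          - Real.pi * Complex.I *
            (∑ j, (((-b) j : ℤ) : ℂ) * ∑ k, Γ j k * (((-b) k : ℤ) : ℂ))) := by
    have hdiff : (-(2 * Real.pi * Complex.I * (∑ j, (((-b) j : ℤ) : ℂ) * (Z - T + u) j))
          - Real.pi * Complex.I *
            (∑ j, (((-b) j : ℤ) : ℂ) * ∑ k, Γ j k * (((-b) k : ℤ) : ℂ)))
        = (-(2 * Real.pi * Complex.I * (∑ j, (((-b) j : ℤ) : ℂ) * (Z + u) j))
          - Real.pi * Complex.I *
            (∑ j, (((-b) j : ℤ) : ℂ) * ∑ k, Γ j k * (((-b) k : ℤ) : ℂ)))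
          + ((-N : ℤ) : ℂ) * (2 * Real.pi * Complex.I) := by
      have hsplit : (∑ j, (((-b) j : ℤ) : ℂ) * (Z - T + u) j)
          = (∑ j, (((-b) j : ℤ) : ℂ) * (Z + u) j) + ∑ j, (b j : ℂ) * T j := by
        rw [← Finset.sum_add_distrib]
        refine Finset.sum_congr rfl fun j _ => ?_
        simp only [Pi.add_apply, Pi.sub_apply, Pi.neg_apply, Int.cast_neg]
        ring
      rw [hsplit, hN]
      push_cast
      ring
    rw [hdiff, Complex.exp_add, Complex.exp_int_mul_two_pi_mul_I, mul_one]
  -- now assemble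
  have hθZc : starRingEnd ℂ (theta Γ Z) ≠ 0 := star_ne_zero.mpr hθZ
  have hθZTc : starRingEnd ℂ (theta Γ (Z - T)) ≠ 0 := star_ne_zero.mpr hθZT
  rw [hq₀]
  simp only [map_mul, map_div₀, map_inv₀, h1, h2, hC]
  simp only [← Complex.exp_conj]
  have hce : starRingEnd ℂ (-(Complex.I * ((e : ℂ) * (x : ℂ) + (ω : ℂ) * (t : ℂ))))
      = Complex.I * ((e : ℂ) * (x : ℂ) + (ω : ℂ) * (t : ℂ)) := by
    simp only [map_neg, map_mul, map_add, Complex.conj_I, Complex.conj_ofReal]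
    ring
  have hcϑ : starRingEnd ℂ (Complex.I * (ϑ : ℂ)) = -(Complex.I * (ϑ : ℂ)) := by
    simp only [map_mul, Complex.conj_I, Complex.conj_ofReal]
    ring
  rw [hce, hcϑ, Complex.exp_neg]
  field_simp [hθZ, hθZT, hP, hθZc, hθZTc, Complex.exp_ne_zero]
end

section
/- (Theorem 3.3, defocusing reduction q = −conj(r), theta-function form) Assume conj(Γ) = 𝒫 − Γ, where 𝒫 is the g×g matrix with entries 𝒫_{jk} = 1 − δ_{jk}. Fix k ∈ {1,…,g} and let ε_k be the k-th standard basis vector. Let Z, Q, T ∈ ℂ^g and n, m ∈ ℤ^g satisfy conj(Z) + conj(Q) = Z + n + Γm, 2·Re(T) = ε_k, and suppose the k-th component m_k of m is odd; set Y = Z + T + Q. Let V, W ∈ ℂ^g be real vectors, i.e. conj(V) = V and conj(W) = W, and let e, ω, φ ∈ ℝ. Assume θ(Z) ≠ 0 and θ(Z−T) ≠ 0, and set q₀ = (θ(Z−T)/θ(Z))·exp(−π⟨m, Im T⟩ + iφ). For real x, t put u = Vx + Wt and define q(x,t) = q₀ · (θ(Z)/θ(Z−T)) · (θ(Z−T+u)/θ(Z+u))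 · exp(i(ex+ωt)) and r(x,t) = q₀⁻¹ · (θ(Z−T)/θ(Z)) · (θ(Y+u)/θ(Y−T+u)) · exp(−i(ex+ωt)). Then for all real x, t such that θ(Z+u) ≠ 0 and θ(Y−T+u) ≠ 0, one has q(x,t) = −conj(r(x,t)). -/
/-!
Under `conj Γ = 𝒫 - Γ`, conjugating the theta series and reindexing `m ↦ -m` gives
`conj θ(z) = θ(conj z)`: the extra term `πi⟨m, 𝒫m⟩ = πi((Σ mⱼ)² - Σ mⱼ²)` is an even multiple
of `πi`. The constraint on `Z + Q` says that `conj(Y - T + u)` and `conj(Y + u)` are the lattice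
translates of `Z + u` and `Z - T + u` by `n + Γm` and `n + ε_k + Γm`, so quasi-periodicity of `θ`
relates them with automorphy factors differing by `exp(2πi⟨m, T⟩) = -exp(-2π⟨m, Im T⟩)`, the sign
coming from `m_k` odd. That factor is `P · conj P` for the phase `P` of `q₀`, whence
`q = -conj r`.
-/

open scoped BigOperators

open Complex Matrix
open scoped Real

noncomputable def intVec {ι : Type*} : (ι → ℤ) →+ (ι → ℂ) := (Int.castAddHom ℂ).compLeft ι

@[simp] lemma intVec_apply {ι : Type*} (m : ι → ℤ) (j : ι) : intVec m j = m j := rfl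

lemma intVec_dotProduct_intVec {ι : Type*} [Fintype ι] (p n : ι → ℤ) :
    intVec p ⬝ᵥ intVec n = ((p ⬝ᵥ n : ℤ) : ℂ) := by
  simp [dotProduct]

lemma Matrix.IsSymm.dotProduct_mulVec_comm {ι R : Type*} [Fintype ι] [CommSemiring R]
    {A : Matrix ι ι R} (hA : A.IsSymm) (v w : ι → R) : v ⬝ᵥ A *ᵥ w = w ⬝ᵥ A *ᵥ v := by
  rw [dotProduct_mulVec, dotProduct_comm, ← vecMul_transpose, hA.eq]

lemma star_intVec_dotProduct {ι : Type*} [Fintype ι] (m : ι → ℤ) (w : ι → ℂ) :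
    star (intVec m ⬝ᵥ w) = intVec m ⬝ᵥ star w := by
  simp [dotProduct]

lemma Int.even_sq_sum_sub_sum_sq {ι : Type*} (s : Finset ι) (m : ι → ℤ) :
    Even ((∑ i ∈ s, m i) ^ 2 - ∑ i ∈ s, m i ^ 2) := by
  have h : (∑ i ∈ s, m i) ^ 2 - ∑ i ∈ s, m i ^ 2
      = (∑ i ∈ s, m i) * (∑ i ∈ s, m i - 1) - ∑ i ∈ s, m i * (m i - 1) := by
    simp only [mul_sub, mul_one, Finset.sum_sub_distrib]; ring_nf
  rw [h]
  exact (Int.even_mul_pred_self _).sub (Finset.even_sum _ fun i _ => Int.even_mul_pred_self _)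

lemma sum_mul_sum_offDiag {ι R : Type*} [Fintype ι] [DecidableEq ι] [CommRing R] (v : ι → R) :
    ∑ j, v j * ∑ k, (if j = k then 0 else 1) * v k = (∑ j, v j) ^ 2 - ∑ j, v j ^ 2 := by
  have h : ∀ j, ∑ k, (if j = k then (0 : R) else 1) * v k = ∑ k, v k - v j := by
    intro j
    rw [eq_sub_iff_add_eq, ← Finset.add_sum_erase _ _ (Finset.mem_univ j)]
    simp [Finset.sum_ite, Finset.filter_ne, add_comm]
  simp only [h, mul_sub, Finset.sum_sub_distrib, ← Finset.sum_mul, sq]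

section Theta

variable {g : ℕ} (Γ : Matrix (Fin g) (Fin g) ℂ)

lemma theta_eq_tsum (z : Fin g → ℂ) :
    theta Γ z = ∑' m : Fin g → ℤ,
      exp (2 * π * I * (intVec m ⬝ᵥ z) + π * I * (intVec m ⬝ᵥ Γ *ᵥ intVec m)) := rfl

noncomputable def automorphyFactor (m : Fin g → ℤ) (z : Fin g → ℂ) : ℂ :=
  exp (-(2 * π * I * (intVec m ⬝ᵥ z)) - π * I * (intVec m ⬝ᵥ Γ *ᵥ intVec m))

lemma automorphyFactor_sub (m : Fin g → ℤ) (z w : Fin g → ℂ) :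
    automorphyFactor Γ m (z - w) = exp (2 * π * I * (intVec m ⬝ᵥ w)) * automorphyFactor Γ m z := by
  rw [automorphyFactor, automorphyFactor, ← exp_add, dotProduct_sub]
  ring_nf

lemma automorphyFactor_ne_zero (m : Fin g → ℤ) (z : Fin g → ℂ) : automorphyFactor Γ m z ≠ 0 :=
  exp_ne_zero _

variable {Γ}

theorem theta_add_lattice (hΓ : Γ.IsSymm) (z : Fin g → ℂ) (n m : Fin g → ℤ) :
    theta Γ (z + intVec n + Γ *ᵥ intVec m) = automorphyFactor Γ m z * theta Γ z := by
  rw [theta_eq_tsum, theta_eq_tsum, ← tsum_mul_left, ← (Equiv.subRight m).tsum_eq]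
  refine tsum_congr fun p => ?_
  have hsymm := hΓ.dotProduct_mulVec_comm (intVec m) (intVec p)
  have hexp : 2 * π * I * (intVec (p - m) ⬝ᵥ (z + intVec n + Γ *ᵥ intVec m))
        + π * I * (intVec (p - m) ⬝ᵥ Γ *ᵥ intVec (p - m))
      = ((p - m) ⬝ᵥ n : ℤ) * (2 * π * I)
        + (-(2 * π * I * (intVec m ⬝ᵥ z)) - π * I * (intVec m ⬝ᵥ Γ *ᵥ intVec m))
        + (2 * π * I * (intVec p ⬝ᵥ z) + π * I * (intVec p ⬝ᵥ Γ *ᵥ intVec p)) := by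
    rw [← intVec_dotProduct_intVec]
    simp only [map_sub, sub_dotProduct, dotProduct_add, mulVec_sub, dotProduct_sub]
    linear_combination (-(π:ℂ) * I) * hsymm
  rw [Equiv.subRight_apply, hexp, exp_add, exp_add, exp_int_mul_two_pi_mul_I, one_mul,
    automorphyFactor]

theorem star_theta
    (hΓconj : ∀ j k, starRingEnd ℂ (Γ j k) = (if j = k then 0 else 1) - Γ j k)
    (z : Fin g → ℂ) : starRingEnd ℂ (theta Γ z) = theta Γ (star z) := by
  rw [theta_eq_tsum, theta_eq_tsum, starRingEnd_apply, tsum_star, ← (Equiv.neg _).tsum_eq]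
  refine tsum_congr fun m => ?_
  obtain ⟨K, hK⟩ := Int.even_sq_sum_sub_sum_sq Finset.univ m
  have hquad : star (intVec m ⬝ᵥ Γ *ᵥ intVec m) = 2 * (K : ℂ) - intVec m ⬝ᵥ Γ *ᵥ intVec m := by
    have hK' : (∑ i, (m i : ℂ)) ^ 2 - ∑ i, (m i : ℂ) ^ 2 = 2 * K := by
      exact_mod_cast hK.trans (two_mul K).symm
    have hoff := sum_mul_sum_offDiag (intVec m)
    simp only [intVec_apply] at hoff
    simp only [dotProduct, mulVec, star_sum, star_mul', intVec_apply, star_intCast,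
      Complex.star_def, hΓconj, sub_mul, Finset.sum_sub_distrib, mul_sub]
    rw [hoff, hK']
  have hexp : star (2 * π * I * (intVec (-m) ⬝ᵥ z) + π * I * (intVec (-m) ⬝ᵥ Γ *ᵥ intVec (-m)))
      = (-K : ℤ) * (2 * π * I) + (2 * π * I * (intVec m ⬝ᵥ star z)
          + π * I * (intVec m ⬝ᵥ Γ *ᵥ intVec m)) := by
    simp only [map_neg, neg_dotProduct, mulVec_neg, dotProduct_neg, neg_neg, star_add, star_mul',
      star_neg, star_intVec_dotProduct, hquad]
    simp only [Complex.star_def, map_ofNat, conj_ofReal, conj_I]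
    push_cast
    ring
  rw [Equiv.neg_apply, ← starRingEnd_apply, ← Complex.exp_conj, starRingEnd_apply, hexp, exp_add,
    exp_int_mul_two_pi_mul_I, one_mul]

end Theta

lemma star_eq_intVec_single_sub {ι : Type*} [DecidableEq ι] {T : ι → ℂ} {k : ι}
    (hT : ∀ j, 2 * (T j).re = if j = k then 1 else 0) :
    star T = intVec (Pi.single k 1) - T := by
  funext j
  rw [Pi.star_apply, Pi.sub_apply, intVec_apply, Pi.single_apply, eq_sub_iff_add_eq',
    Complex.star_def, Complex.add_conj, hT]
  split_ifs <;> simp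

lemma exp_two_pi_I_intVec_dotProduct {ι : Type*} [Fintype ι] [DecidableEq ι] {T : ι → ℂ} {k : ι}
    (hT : ∀ j, 2 * (T j).re = if j = k then 1 else 0) {m : ι → ℤ} (hmk : Odd (m k)) :
    exp (2 * π * I * (intVec m ⬝ᵥ T)) = -exp (-(2 * (π * ∑ j, (m j : ℝ) * (T j).im : ℝ))) := by
  have hre : ∀ j, ((T j).re : ℂ) = if j = k then 1 / 2 else 0 := by
    intro j
    have := hT j
    split_ifs at this ⊢
    · rw [show (T j).re = 1 / 2 by linarith]; push_cast; rfl
    · rw [show (T j).re = 0 by linarith]; push_cast; rfl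
  have hdot : 2 * π * I * (intVec m ⬝ᵥ T)
      = (m k : ℂ) * (π * I) + -(2 * ((π * ∑ j, (m j : ℝ) * (T j).im : ℝ) : ℂ)) := by
    have hsplit : intVec m ⬝ᵥ T = ∑ j, (m j : ℂ) * (T j).re + I * ∑ j, (m j : ℂ) * (T j).im := by
      simp only [dotProduct, intVec_apply, Finset.mul_sum, ← Finset.sum_add_distrib]
      refine Finset.sum_congr rfl fun j _ => ?_
      conv_lhs => rw [← Complex.re_add_im (T j)]
      ring
    simp only [hsplit, hre, mul_ite, mul_zero, Finset.sum_ite_eq', Finset.mem_univ, if_true]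
    push_cast
    linear_combination (2 * (π : ℂ) * ∑ j, (m j : ℂ) * (T j).im) * I_mul_I
  rw [hdot, exp_add, exp_int_mul, exp_pi_mul_I, hmk.neg_one_zpow, neg_one_mul]

theorem star_theta_ratio {g : ℕ} {Γ : Matrix (Fin g) (Fin g) ℂ} (hΓsymm : Γ.IsSymm)
    (hΓconj : ∀ j k, starRingEnd ℂ (Γ j k) = (if j = k then 0 else 1) - Γ j k)
    {k : Fin g} {Z Q T Y : Fin g → ℂ} {n m : Fin g → ℤ}
    (hZQ : star Z + star Q = Z + intVec n + Γ *ᵥ intVec m)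
    (hT : ∀ j, 2 * (T j).re = if j = k then 1 else 0) (hmk : Odd (m k)) (hY : Y = Z + T + Q)
    {w : Fin g → ℂ} (hw : star w = w) :
    starRingEnd ℂ (theta Γ (Y + w) / theta Γ (Y - T + w))
      = -exp (-(2 * (π * ∑ j, (m j : ℝ) * (T j).im : ℝ)))
          * (theta Γ (Z - T + w) / theta Γ (Z + w)) := by
  have hTstar := star_eq_intVec_single_sub hT
  have hYT : star (Y - T + w) = Z + w + intVec n + Γ *ᵥ intVec m := by
    rw [hY, star_add, star_sub, star_add, star_add, hw]
    linear_combination hZQ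
  have hYw : star (Y + w) = Z + w - T + intVec (n + Pi.single k 1) + Γ *ᵥ intVec m := by
    rw [hY, star_add, star_add, star_add, hw, map_add]
    linear_combination hZQ + hTstar
  rw [map_div₀, star_theta hΓconj, star_theta hΓconj, hYT, hYw, theta_add_lattice hΓsymm,
    theta_add_lattice hΓsymm, automorphyFactor_sub, exp_two_pi_I_intVec_dotProduct hT hmk,
    sub_add_eq_add_sub Z T w, mul_right_comm, mul_comm (automorphyFactor _ _ _),
    mul_div_mul_right _ _ (automorphyFactor_ne_zero _ _ _), mul_div_assoc]

theorem defocusing_reduction_general (g : ℕ) (Γ : Matrix (Fin g) (Fin g) ℂ)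
    (hΓsymm : Γ.IsSymm)
    (hΓconj : ∀ j k, starRingEnd ℂ (Γ j k) = (if j = k then 0 else 1) - Γ j k)
    (k : Fin g) (Z Q T : Fin g → ℂ) (n m : Fin g → ℤ)
    (hZQ : (fun j => starRingEnd ℂ (Z j) + starRingEnd ℂ (Q j))
        = Z + (fun j => (n j : ℂ)) + Γ.mulVec (fun j => (m j : ℂ)))
    (hT : ∀ j, 2 * (T j).re = if j = k then 1 else 0)
    (hmk : Odd (m k))
    (Y : Fin g → ℂ) (hY : Y = Z + T + Q)
    (V W : Fin g → ℂ)
    (hV : ∀ j, starRingEnd ℂ (V j) = V j)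
    (hW : ∀ j, starRingEnd ℂ (W j) = W j)
    (e ω φ : ℝ)
    (hθZ : theta Γ Z ≠ 0) (hθZT : theta Γ (Z - T) ≠ 0)
    (q₀ : ℂ)
    (hq₀ : q₀ = theta Γ (Z - T) / theta Γ Z
        * Complex.exp (-((Real.pi * ∑ j, (m j : ℝ) * (T j).im : ℝ) : ℂ)
            + Complex.I * (φ : ℂ))) :
    ∀ x t : ℝ,
      theta Γ (Z + fun j => V j * (x : ℂ) + W j * (t : ℂ)) ≠ 0 →
      theta Γ (Y - T + fun j => V j * (x : ℂ) + W j * (t : ℂ)) ≠ 0 →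
      q₀ * (theta Γ Z / theta Γ (Z - T))
          * (theta Γ (Z - T + fun j => V j * (x : ℂ) + W j * (t : ℂ))
              / theta Γ (Z + fun j => V j * (x : ℂ) + W j * (t : ℂ)))
          * Complex.exp (Complex.I * ((e : ℂ) * (x : ℂ) + (ω : ℂ) * (t : ℂ)))
        = -starRingEnd ℂ
            (q₀⁻¹ * (theta Γ (Z - T) / theta Γ Z)
              * (theta Γ (Y + fun j => V j * (x : ℂ) + W j * (t : ℂ))
                  / theta Γ (Y - T + fun j => V j * (x : ℂ) + W j * (t : ℂ)))
              * Complex.exp (-(Complex.I * ((e : ℂ) * (x : ℂ) + (ω : ℂ) * (t : ℂ))))) := by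
  intro x t _ _
  set u : Fin g → ℂ := fun j => V j * x + W j * t
  set a : ℝ := π * ∑ j, (m j : ℝ) * (T j).im
  set P := exp (-(a : ℂ) + I * φ)
  have hu : star u = u := funext fun j => by
    rw [Pi.star_apply, Complex.star_def, map_add, map_mul, map_mul, hV, hW, conj_ofReal,
      conj_ofReal]
  have hq : q₀ * (theta Γ Z / theta Γ (Z - T)) = P := by rw [hq₀]; field_simp
  have hr : q₀⁻¹ * (theta Γ (Z - T) / theta Γ Z) = P⁻¹ := by rw [hq₀]; field_simp
  have hP : exp (-(2 * (a : ℂ))) = P * starRingEnd ℂ P := by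
    rw [← Complex.exp_conj, ← exp_add]
    congr 1
    simp only [map_add, map_neg, conj_ofReal, map_mul, conj_I, neg_mul]
    ring
  have hphase : starRingEnd ℂ (exp (-(I * (e * x + ω * t)))) = exp (I * (e * x + ω * t)) := by
    rw [← Complex.exp_conj]; congr 1; simp
  have hP_ne : starRingEnd ℂ P ≠ 0 := (map_ne_zero _).mpr (exp_ne_zero _)
  rw [hq, hr, map_mul, map_mul, map_inv₀, hphase,
    star_theta_ratio hΓsymm hΓconj hZQ hT hmk hY hu, hP]
  field_simp

/-- (Theorem 3.3, defocusing reduction `q = −conj r` in theta-function form.)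
Under `conj Γ = 𝒫 − Γ` with `𝒫_{jk} = 1 − δ_{jk}`, the constraint
`conj Z + conj Q = Z + n + Γm` with `2·Re T = ε_k` and `m_k` odd,
`Y = Z + T + Q`, real frequency vectors `V, W`, and the choice
`q₀ = (θ(Z−T)/θ(Z))·exp(−π⟨m, Im T⟩ + iφ)` of initial value, the
theta-function expressions `q(x,t)` and `r(x,t)` of (1.27)–(1.28) satisfy
`q(x,t) = −conj (r(x,t))` wherever the denominators do not vanish. -/
theorem defocusing_reduction (g : ℕ) (hg : 0 < g) (Γ : Matrix (Fin g) (Fin g) ℂ)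
    (hΓsymm : Γ.IsSymm) (hΓim : (Γ.map Complex.im).PosDef)
    (hΓconj : ∀ j k, starRingEnd ℂ (Γ j k) = (if j = k then 0 else 1) - Γ j k)
    (k : Fin g) (Z Q T : Fin g → ℂ) (n m : Fin g → ℤ)
    (hZQ : (fun j => starRingEnd ℂ (Z j) + starRingEnd ℂ (Q j))
        = Z + (fun j => (n j : ℂ)) + Γ.mulVec (fun j => (m j : ℂ)))
    (hT : ∀ j, 2 * (T j).re = if j = k then 1 else 0)
    (hmk : Odd (m k))
    (Y : Fin g → ℂ) (hY : Y = Z + T + Q)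
    (V W : Fin g → ℂ)
    (hV : ∀ j, starRingEnd ℂ (V j) = V j)
    (hW : ∀ j, starRingEnd ℂ (W j) = W j)
    (e ω φ : ℝ)
    (hθZ : theta Γ Z ≠ 0) (hθZT : theta Γ (Z - T) ≠ 0)
    (q₀ : ℂ)
    (hq₀ : q₀ = theta Γ (Z - T) / theta Γ Z
        * Complex.exp (-((Real.pi * ∑ j, (m j : ℝ) * (T j).im : ℝ) : ℂ)
            + Complex.I * (φ : ℂ))) :
    ∀ x t : ℝ,
      theta Γ (Z + fun j => V j * (x : ℂ) + W j * (t : ℂ)) ≠ 0 →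
      theta Γ (Y - T + fun j => V j * (x : ℂ) + W j * (t : ℂ)) ≠ 0 →
      q₀ * (theta Γ Z / theta Γ (Z - T))
          * (theta Γ (Z - T + fun j => V j * (x : ℂ) + W j * (t : ℂ))
              / theta Γ (Z + fun j => V j * (x : ℂ) + W j * (t : ℂ)))
          * Complex.exp (Complex.I * ((e : ℂ) * (x : ℂ) + (ω : ℂ) * (t : ℂ)))
        = -starRingEnd ℂ
            (q₀⁻¹ * (theta Γ (Z - T) / theta Γ Z)
              * (theta Γ (Y + fun j => V j * (x : ℂ) + W j * (t : ℂ))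
                  / theta Γ (Y - T + fun j => V j * (x : ℂ) + W j * (t : ℂ)))
              * Complex.exp (-(Complex.I * ((e : ℂ) * (x : ℂ) + (ω : ℂ) * (t : ℂ))))) :=
  defocusing_reduction_general g Γ hΓsymm hΓconj k Z Q T n m hZQ hT hmk Y hY V W hV hW e ω φ hθZ
    hθZT q₀ hq₀
end
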